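/- Theorem A (precompactness), boundary part: Let (M_i, g_i, x⁰_i) be a sequence of pointed connected Riemannian n-manifolds with non-empty boundary of (c, k+1)-bounded geometry, and assume in addition that the sequence of distances d^{g_i}(x⁰_i, ∂M_i) is bounded. Then any pointed Riemannian manifold (M_∞, g_∞, x⁰_∞) arising as a C^k Cheeger–Gromov limit of a subsequence of (M_i, g_i, x⁰_i) has non-empty boundary. -/

import Mathlib

open scoped Manifold
open Filter Metric Set

noncomputable section

/-! ### A framework for pointed Riemannian manifolds with (possibly empty) boundary

Mathlib does not yet have Riemannian metrics, curvature tensors, injectivity radii,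
normal exponential maps or second fundamental forms.  We therefore bundle a pointed
Riemannian `n`-manifold (possibly with boundary, modelled on the Euclidean half space)
together with these derived geometric quantities, recorded as data of the bundle with
their intended meaning explained in the docstrings. -/

/-- The model Euclidean space. -/
abbrev Euc (n : ℕ) := EuclideanSpace ℝ (Fin n)

/-- The space in which (0,2)-tensors on the tangent spaces take values, using the
canonical identification `TangentSpace (𝓡∂ n) x = Euc n`. -/
abbrev TensorSp (n : ℕ) := Euc n →L[ℝ] Euc n →L[ℝ] ℝ

/-- A pointed connected Riemannian `n`-manifold with (possibly empty) boundary,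
bundled with its geodesic distance (as a `MetricSpace` structure), together with the
geometric quantities relevant for bounded geometry. -/
structure PRM (n : ℕ) [NeZero n] : Type 1 where
  /-- the underlying set of the manifold -/
  M : Type
  /-- the geodesic distance `d^g` of the Riemannian metric -/
  [ms : MetricSpace M]
  [cs : ChartedSpace (EuclideanHalfSpace n) M]
  smooth : IsManifold (𝓡∂ n) (⊤ : ℕ∞) M
  connected : ConnectedSpace M
  /-- the Riemannian metric `g`, viewed through `TangentSpace (𝓡∂ n) x = Euc n` -/
  g : M → TensorSp n
  g_smooth : ContMDiff (𝓡∂ n) 𝓘(ℝ, TensorSp n) (⊤ : ℕ∞) g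
  g_symm : ∀ x v w, g x v w = g x w v
  g_posdef : ∀ x v, v ≠ 0 → 0 < g x v v
  /-- the base point `x⁰` -/
  pt : M
  /-- `curvNorm l x` is the pointwise norm `|∇^l Rm_g|_g (x)` -/
  curvNorm : ℕ → M → ℝ
  /-- `sffNorm l x` is the pointwise norm `|∇_{∂g}^l II|_g (x)` of the covariant
  derivatives of the second fundamental form of the boundary -/
  sffNorm : ℕ → M → ℝ
  /-- `injOn S` is the injectivity radius `inj_g` of `g` on the subset `S` -/
  injOn : Set M → ℝ
  /-- the injectivity radius `inj_{∂g}(∂M)` of the boundary with its induced metric -/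
  injBoundary : ℝ
  /-- `normalExpDiffeo r` states that the normal exponential map
  `E : ∂M × [0,r] → M`, `E(y,s) = exp_y(s ν)` (for the inward unit normal `ν`),
  is a diffeomorphism onto its image -/
  normalExpDiffeo : ℝ → Prop
  /-- `covNorm l f x` is the pointwise norm `|∇^l f|(x)` of the `l`-th covariant
  derivative of a function `f` (so `covNorm 0 f = |f|` and `covNorm 1 f = |∇_g f|_g`) -/
  covNorm : ℕ → (M → ℝ) → M → ℝ

attribute [instance] PRM.ms PRM.cs

namespace PRM

variable {n : ℕ} [NeZero n]

/-- The boundary `∂M` of the manifold. -/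
def bd (X : PRM n) : Set X.M := (𝓡∂ n).boundary X.M

/-- A manifold without boundary. -/
def Boundaryless (X : PRM n) : Prop := X.bd = ∅

/-- `(c,k)`-bounded geometry of a Riemannian manifold with (possibly empty) boundary:
(i) the normal exponential map on `∂M × [0, c⁻¹]` is a diffeomorphism onto its image;
(ii) `inj_{∂g}(∂M) ≥ c⁻¹`; (iii) `inj_g(M ∖ B(∂M,r)) ≥ r` for all `0 < r ≤ c⁻¹`;
(iv) `|∇^l Rm_g| ≤ c` for `l ≤ k`; (v) `|∇^l II| ≤ c` for `l ≤ k`.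
When `∂M = ∅`, (i), (ii), (v) are empty and (iii) says `inj_g ≥ c⁻¹`. -/
def BoundedGeometry (c : ℝ) (k : ℕ) (X : PRM n) : Prop :=
  (X.bd.Nonempty → X.normalExpDiffeo c⁻¹ ∧ c⁻¹ ≤ X.injBoundary) ∧
  (∀ r : ℝ, 0 < r → r ≤ c⁻¹ → r ≤ X.injOn {x | ∀ y ∈ X.bd, r ≤ dist x y}) ∧
  (∀ l ≤ k, ∀ x, X.curvNorm l x ≤ c) ∧
  (∀ l ≤ k, ∀ x ∈ X.bd, X.sffNorm l x ≤ c)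

/-- `(c,k)`-bounded geometry of a *pointed* manifold: in addition, the base point
is at distance at least `2c⁻¹` from the boundary. -/
def PointedBoundedGeometry (c : ℝ) (k : ℕ) (X : PRM n) : Prop :=
  X.BoundedGeometry c k ∧ ∀ y ∈ X.bd, 2 * c⁻¹ ≤ dist X.pt y

/-- The `C^k` distance of two tensor fields (or functions) `s t : M → F` on a subset
`U`: the supremum over `x ∈ U` and `j ≤ k` of the norm at (the image of) `x` of the
`j`-th derivative of `s - t`, computed in the preferred chart at `x`. -/
def ckDistOn (X : PRM n) {F : Type} [NormedAddCommGroup F] [NormedSpace ℝ F]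
    (k : ℕ) (U : Set X.M) (s t : X.M → F) : ℝ :=
  ⨆ x : U, ⨆ j : Fin (k + 1),
    ‖iteratedFDerivWithin ℝ (j : ℕ)
      ((fun y => s y - t y) ∘ (extChartAt (𝓡∂ n) (x : X.M)).symm)
      (extChartAt (𝓡∂ n) (x : X.M)).target
      (extChartAt (𝓡∂ n) (x : X.M) (x : X.M))‖

/-- The pullback `φ^* g_Y` of the Riemannian metric of `Y` under `φ : X → Y`. -/
def pullbackMetric (X Y : PRM n) (φ : X.M → Y.M) : X.M → TensorSp n :=
  fun x => (Y.g (φ x)).bilinearComp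
    (mfderiv (𝓡∂ n) (𝓡∂ n) φ x) (mfderiv (𝓡∂ n) (𝓡∂ n) φ x)

/-- `φ` restricted to `U` is a diffeomorphism onto its image. -/
def IsDiffeoOntoImage (X Y : PRM n) (U : Set X.M) (φ : X.M → Y.M) : Prop :=
  Set.InjOn φ U ∧ ContMDiffOn (𝓡∂ n) (𝓡∂ n) (⊤ : ℕ∞) φ U ∧
    ∃ ψ : Y.M → X.M, ContMDiffOn (𝓡∂ n) (𝓡∂ n) (⊤ : ℕ∞) ψ (φ '' U) ∧ Set.EqOn (ψ ∘ φ) id U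

/-- Cheeger–Gromov `C^k`-convergence of a sequence of pointed Riemannian manifolds:
for every `m ≥ 1` and all sufficiently large `i` there are an open set
`U ⊇ B(x⁰_∞, m)` and diffeomorphisms onto their images `φ i : U → M_i` with
`φ i x⁰_∞ = x⁰_i`, `B(x⁰_i, m) ⊆ φ i '' U`, and `(φ i)^* g_i → g_∞` in `C^k` on `U`. -/
def CGConverges (k : ℕ) (X : ℕ → PRM n) (L : PRM n) : Prop :=
  ∀ m : ℕ, 1 ≤ m → ∃ (U : Set L.M) (φ : ∀ i, L.M → (X i).M) (N : ℕ),
    IsOpen U ∧ ball L.pt (m : ℝ) ⊆ U ∧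
    (∀ i, N ≤ i → IsDiffeoOntoImage L (X i) U (φ i) ∧ φ i L.pt = (X i).pt ∧
      ball (X i).pt (m : ℝ) ⊆ φ i '' U) ∧
    Tendsto (fun i => ckDistOn L k U (pullbackMetric L (X i) (φ i)) L.g) atTop (nhds 0)

/-- A `(c,k)`-height function on a pointed Riemannian manifold `(X,g,x⁰)`:
a smooth function `f : X → (−∞, 1]` such that (i) `|∇_g f| ≥ c⁻¹` on
`f⁻¹([−1/2, 1/2])` and `f⁻¹(0) ≠ ∅`; (ii) `f(x⁰) > 0` and
`d^g(x⁰, f⁻¹(0)) ∈ (c⁻¹, c)`; (iii) `|∇^l f| ≤ c` for all `l ≤ k`. -/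
structure IsHeightFunction (c : ℝ) (k : ℕ) (X : PRM n) (f : X.M → ℝ) : Prop where
  smooth : ContMDiff (𝓡∂ n) 𝓘(ℝ) (⊤ : ℕ∞) f
  le_one : ∀ x, f x ≤ 1
  grad_lower : ∀ x, f x ∈ Set.Icc (-(1/2) : ℝ) (1/2) → c⁻¹ ≤ X.covNorm 1 f x
  zero_nonempty : (f ⁻¹' {0}).Nonempty
  pos_at_pt : 0 < f X.pt
  dist_pt_zero : Metric.infDist X.pt (f ⁻¹' {0}) ∈ Set.Ioo c⁻¹ c
  deriv_bounds : ∀ l ≤ k, ∀ x, X.covNorm l f x ≤ c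

/-- Cheeger–Gromov `C^k`-convergence of manifolds together with `C^k`-convergence,
via the same comparison diffeomorphisms, of the pulled-back functions `φ_i^* f_i`
to `f_∞` on every ball `B(x⁰_∞, m)`. -/
def CGConvergesWith (k : ℕ) (X : ℕ → PRM n) (f : ∀ i, (X i).M → ℝ)
    (L : PRM n) (flim : L.M → ℝ) : Prop :=
  ∀ m : ℕ, 1 ≤ m → ∃ (U : Set L.M) (φ : ∀ i, L.M → (X i).M) (N : ℕ),
    IsOpen U ∧ ball L.pt (m : ℝ) ⊆ U ∧
    (∀ i, N ≤ i → IsDiffeoOntoImage L (X i) U (φ i) ∧ φ i L.pt = (X i).pt ∧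
      ball (X i).pt (m : ℝ) ⊆ φ i '' U) ∧
    Tendsto (fun i => ckDistOn L k U (pullbackMetric L (X i) (φ i)) L.g)
      atTop (nhds 0) ∧
    Tendsto (fun i => ckDistOn L k U (fun x => f i (φ i x)) flim) atTop (nhds 0)

/-- Cheeger–Gromov `C^k`-convergence of the cut manifolds `S_i ⊆ X_i` (e.g.
`S_i = f_i⁻¹([0,1])`, manifolds with boundary sitting inside the ambient manifolds)
to a cut manifold `S_∞ ⊆ X_∞`: for every `m ≥ 1` and all large `i` there are an
ambient open set `V` with `B(x⁰_∞, m) ∩ S_∞ ⊆ V` and diffeomorphisms onto their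
images `φ i : V → X_i` fixing the base points, mapping `V ∩ S_∞` into `S_i`,
whose images catch `B(x⁰_i, m) ∩ S_i`, with `(φ i)^* g_i → g_∞` in `C^k` on `V ∩ S_∞`. -/
def CGConvergesCut (k : ℕ) (X : ℕ → PRM n) (S : ∀ i, Set (X i).M)
    (L : PRM n) (Slim : Set L.M) : Prop :=
  ∀ m : ℕ, 1 ≤ m → ∃ (V : Set L.M) (φ : ∀ i, L.M → (X i).M) (N : ℕ),
    IsOpen V ∧ ball L.pt (m : ℝ) ∩ Slim ⊆ V ∧
    (∀ i, N ≤ i → IsDiffeoOntoImage L (X i) V (φ i) ∧ φ i L.pt = (X i).pt ∧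
      φ i '' (V ∩ Slim) ⊆ S i ∧
      ball (X i).pt (m : ℝ) ∩ S i ⊆ φ i '' (V ∩ Slim)) ∧
    Tendsto (fun i => ckDistOn L k (V ∩ Slim)
      (pullbackMetric L (X i) (φ i)) L.g) atTop (nhds 0)

end PRM

open PRM

/-! Since `d(x⁰_i, ∂M_i) ≤ D`, for `m > D` every ball `B(x⁰_i, m)` contains a boundary point
of `M_i`, and it lies in the image of a comparison map `φ_i : U → M_i`. A diffeomorphism onto its
image has invertible differential, so by the inverse function theorem it sends interior points to
interior points; hence that boundary point has a boundary preimage in `M_∞`. -/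

section InteriorPoint

variable {E H H' : Type*} [NormedAddCommGroup E] [NormedSpace ℝ E]
  [TopologicalSpace H] [TopologicalSpace H'] {I : ModelWithCorners ℝ E H}
  {I' : ModelWithCorners ℝ E H'}
  {M M' : Type*} [TopologicalSpace M] [ChartedSpace H M]
  [TopologicalSpace M'] [ChartedSpace H' M']
  {U : Set M} {φ : M → M'} {ψ : M' → M} {x : M}

theorem injective_mfderiv_of_leftInvOn (hU : IsOpen U) (hx : x ∈ U)
    (hφ : MDifferentiableAt I I' φ x) (hψ : MDifferentiableWithinAt I' I ψ (φ '' U) (φ x))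
    (hψφ : EqOn (ψ ∘ φ) id U) : Function.Injective (mfderiv I I' φ x) := by
  have hUx : UniqueMDiffWithinAt I U x := hU.uniqueMDiffWithinAt hx
  have hchain : (mfderivWithin I' I ψ (φ '' U) (φ x)).comp (mfderiv I I' φ x) =
      ContinuousLinearMap.id ℝ (TangentSpace I x) := by
    rw [← mfderivWithin_of_isOpen hU hx,
      ← mfderivWithin_comp x hψ hφ.mdifferentiableWithinAt (mapsTo_image φ U) hUx,
      mfderivWithin_congr hψφ (hψφ hx), mfderivWithin_id hUx]
  exact Function.LeftInverse.injective (g := mfderivWithin I' I ψ (φ '' U) (φ x))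
    fun v => congr($hchain v)

theorem ModelWithCorners.IsInteriorPoint.image_of_leftInvOn [FiniteDimensional ℝ E]
    (hU : IsOpen U) (hx : x ∈ U)
    (hφ : MDifferentiableAt I I' φ x) (hψ : MDifferentiableWithinAt I' I ψ (φ '' U) (φ x))
    (hψφ : EqOn (ψ ∘ φ) id U) (hint : I.IsInteriorPoint x) : I'.IsInteriorPoint (φ x) := by
  have hinj := injective_mfderiv_of_leftInvOn hU hx hφ hψ hψφ
  refine hφ.isInteriorPoint_of_surjective_mfderiv ?_ hint
  let A : E →L[ℝ] E := mfderiv I I' φ x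
  exact LinearMap.injective_iff_surjective (f := A.toLinearMap).mp hinj

end InteriorPoint

namespace PRM

variable {n : ℕ} [NeZero n] {X Y : PRM n} {U : Set X.M} {φ : X.M → Y.M}

theorem IsDiffeoOntoImage.isInteriorPoint (h : IsDiffeoOntoImage X Y U φ) (hU : IsOpen U)
    {x : X.M} (hx : x ∈ U) (hint : (𝓡∂ n).IsInteriorPoint x) :
    (𝓡∂ n).IsInteriorPoint (φ x) := by
  obtain ⟨-, hφ, ψ, hψ, hψφ⟩ := h
  exact hint.image_of_leftInvOn hU hx
    ((hφ.contMDiffAt (hU.mem_nhds hx)).mdifferentiableAt (by simp))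
    ((hψ _ (mem_image_of_mem φ hx)).mdifferentiableWithinAt (by simp)) hψφ

theorem IsDiffeoOntoImage.disjoint_bd_image (h : IsDiffeoOntoImage X Y U φ) (hU : IsOpen U)
    (hX : X.Boundaryless) : Disjoint Y.bd (φ '' U) := by
  refine disjoint_right.mpr ?_
  rintro _ ⟨x, hx, rfl⟩ hφx
  have hint := (ModelWithCorners.isInteriorPoint_iff_not_isBoundaryPoint x).mpr
    (hX ▸ notMem_empty x)
  exact (ModelWithCorners.isBoundaryPoint_iff_not_isInteriorPoint (φ x)).mp hφx
    (h.isInteriorPoint hU hx hint)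

end PRM

theorem theoremA_boundary_general {n : ℕ} [NeZero n] (k : ℕ)
    (X : ℕ → PRM n)
    (hbd : ∀ i, (X i).bd.Nonempty)
    (hdist : ∃ D : ℝ, ∀ i, Metric.infDist (X i).pt (X i).bd ≤ D)
    (σ : ℕ → ℕ) (L : PRM n)
    (hconv : CGConverges k (fun i => X (σ i)) L) :
    L.bd.Nonempty := by
  by_contra hL
  obtain ⟨D, hD⟩ := hdist
  obtain ⟨m₀, hm₀⟩ := exists_nat_gt D
  obtain ⟨U, φ, N, hU, -, hφ, -⟩ := hconv (m₀ + 1) (Nat.le_add_left 1 m₀)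
  obtain ⟨hdiffeo, -, hball⟩ := hφ N le_rfl
  have hnear : infDist (X (σ N)).pt (X (σ N)).bd < (m₀ + 1 : ℕ) := by
    push_cast
    linarith [hD (σ N)]
  obtain ⟨y, hy, hyd⟩ := (infDist_lt_iff (hbd (σ N))).mp hnear
  exact (hdiffeo.disjoint_bd_image hU (not_nonempty_iff_eq_empty.mp hL)).ne_of_mem hy
    (hball (mem_ball_comm.mp hyd)) rfl

/-- **Theorem A (precompactness), boundary part.**
Let `(M_i, g_i, x⁰_i)` be a sequence of pointed connected Riemannian `n`-manifolds
with non-empty boundary of `(c, k+1)`-bounded geometry, and assume that the sequence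
of distances `d^{g_i}(x⁰_i, ∂M_i)` is bounded.  Then any pointed Riemannian manifold
arising as a `C^k` Cheeger–Gromov limit of a subsequence has non-empty boundary. -/
theorem theoremA_boundary {n : ℕ} [NeZero n] (c : ℝ) (hc : 0 < c) (k : ℕ) (hk : 0 < k)
    (X : ℕ → PRM n)
    (hbd : ∀ i, (X i).bd.Nonempty)
    (hbg : ∀ i, PointedBoundedGeometry c (k + 1) (X i))
    (hdist : ∃ D : ℝ, ∀ i, Metric.infDist (X i).pt (X i).bd ≤ D)
    (σ : ℕ → ℕ) (hσ : StrictMono σ) (L : PRM n)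
    (hconv : CGConverges k (fun i => X (σ i)) L) :
    L.bd.Nonempty :=
  theoremA_boundary_general k X hbd hdist σ L hconv
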